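/- Every deterministic k-way branching program computing SumMod_2^3(k) has at least k^3 states. -/

import Mathlib

/-! ## Tree evaluation problems -/

/-- The `k`-valued input variables of the tree evaluation problem on the complete
`d`-ary tree with `h` levels: the single variable of a height-1 tree is its leaf
value; for a tree of height `h+2`, a variable is either an entry `f_root(args)`
of the root function's table, or a variable of one of the `d` principal subtrees. -/
inductive TEVar (d k : ℕ) : ℕ → Type where
  | leaf : TEVar d k 1
  | root {h : ℕ} (args : Fin d → Fin k) : TEVar d k (h + 2)
  | child {h : ℕ} (j : Fin d) (x : TEVar d k (h + 1)) : TEVar d k (h + 2)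

/-- The value of the root of the tree, computed bottom-up from an assignment of
values to all input variables. (For the degenerate height 0 it returns a junk value.) -/
def rootValue (d k : ℕ) (hk : 0 < k) : (h : ℕ) → (TEVar d k h → Fin k) → Fin k
  | 0, _ => ⟨0, hk⟩
  | 1, I => I .leaf
  | (h + 2), I => I (.root fun j => rootValue d k hk (h + 1) fun x => I (.child j x))

/-- The Boolean tree evaluation problem `BT_d^h(k)`: does the root have value 1
(represented by `(0 : Fin k)`)? -/
def BTfun (d k : ℕ) (hk : 0 < k) (h : ℕ) (I : TEVar d k h → Fin k) : Bool :=
  decide (rootValue d k hk h I = ⟨0, hk⟩)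

/-- `ThriftyVar d k hk h I v` holds iff querying variable `v` on input `I` is a
thrifty query: if `v` is an entry `f_i(args)` of the function table of an internal
node `i`, then `args` must be the tuple of correct values of the children of `i`. -/
def ThriftyVar (d k : ℕ) (hk : 0 < k) : (h : ℕ) → (TEVar d k h → Fin k) → TEVar d k h → Prop
  | 0, _, _ => True
  | 1, _, _ => True
  | (h + 2), I, .root args =>
      args = fun j => rootValue d k hk (h + 1) fun x => I (.child j x)
  | (h + 2), I, .child j x =>
      ThriftyVar d k hk (h + 1) (fun y => I (.child j y)) x

/-! ## k-way branching programs -/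

/-- A deterministic `k`-way branching program with input variables `V` (each taking
values in `[k] = Fin k`) and outputs in `R`. Each state is either a non-final state
labelled with the variable it queries (`Sum.inl v`), with `k` outedges given by
`next`, or a final state labelled with an output (`Sum.inr r`). -/
structure DBP (V : Type) (k : ℕ) (R : Type) where
  Q : Type
  fin : Fintype Q
  start : Q
  label : Q → V ⊕ R
  next : Q → Fin k → Q

namespace DBP

variable {V : Type} {k : ℕ} {R : Type}

/-- The size of a branching program is its number of states. -/
def size (B : DBP V k R) : ℕ := @Fintype.card B.Q B.fin

/-- One deterministic step on input `I` (final states are absorbing). -/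
def step (B : DBP V k R) (I : V → Fin k) (q : B.Q) : B.Q :=
  match B.label q with
  | .inl v => B.next q (I v)
  | .inr _ => q

/-- `B` computes the total function `f`: on every input, the computation reaches the
final state labelled with the correct output. -/
def Computes (B : DBP V k R) (f : (V → Fin k) → R) : Prop :=
  ∀ I : V → Fin k, ∃ t : ℕ, B.label ((B.step I)^[t] B.start) = .inr (f I)

end DBP

/-- A nondeterministic `k`-way branching program: as in `DBP`, but a non-final state
may have any number of outedges with any labels in `Fin k`, given by the edge
relation `edge q a q'`. -/
structure NBP (V : Type) (k : ℕ) (R : Type) where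
  Q : Type
  fin : Fintype Q
  start : Q
  label : Q → V ⊕ R
  edge : Q → Fin k → Q → Prop

namespace NBP

variable {V : Type} {k : ℕ} {R : Type}

/-- The size of a branching program is its number of states. -/
def size (B : NBP V k R) : ℕ := @Fintype.card B.Q B.fin

/-- One nondeterministic step on input `I`: follow an edge out of a non-final state
whose label matches the value of the queried variable. -/
def Step (B : NBP V k R) (I : V → Fin k) (q q' : B.Q) : Prop :=
  ∃ v, B.label q = .inl v ∧ B.edge q (I v) q'

/-- Some computation of `B` on input `I` ends in a final state labelled `r`. -/
def Outputs (B : NBP V k R) (I : V → Fin k) (r : R) : Prop :=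
  ∃ q, Relation.ReflTransGen (B.Step I) B.start q ∧ B.label q = .inr r

/-- `B` computes the total function `f`: on every input some computation ends in a
final state, and every computation ending in a final state ends in the one labelled
with the correct output. -/
def Computes (B : NBP V k R) (f : (V → Fin k) → R) : Prop :=
  ∀ (I : V → Fin k) (r : R), B.Outputs I r ↔ r = f I

end NBP

/-- A deterministic branching program for a tree evaluation problem is thrifty if on
every input, every query made during the computation is a thrifty query. -/
def DBPThrifty {R : Type} (d k h : ℕ) (hk : 0 < k) (B : DBP (TEVar d k h) k R) : Prop :=
  ∀ (I : TEVar d k h → Fin k) (t : ℕ) (v : TEVar d k h),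
    B.label ((B.step I)^[t] B.start) = .inl v → ThriftyVar d k hk h I v

/-- A nondeterministic branching program for a tree evaluation problem is thrifty if
for every input, every computation ending in a final state makes only thrifty
queries. -/
def NBPThrifty {R : Type} (d k h : ℕ) (hk : 0 < k) (B : NBP (TEVar d k h) k R) : Prop :=
  ∀ (I : TEVar d k h → Fin k) (n : ℕ) (path : ℕ → B.Q),
    path 0 = B.start →
    (∀ t < n, B.Step I (path t) (path (t + 1))) →
    (∃ r, B.label (path n) = .inr r) →
    ∀ t < n, ∀ v, B.label (path t) = .inl v → ThriftyVar d k hk h I v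

/-- The problem `SumMod_2^3(k)`: the input consists of two height-2 binary tree
evaluation inputs (the two principal subtrees of the height-3 tree; the root function
is fixed to be addition mod `k`), and the output is the sum mod `k` of the values of
the root's two children. -/
def sumModFun (k : ℕ) (hk : 0 < k) (I : Fin 2 × TEVar 2 k 2 → Fin k) : Fin k :=
  ⟨((rootValue 2 k hk 2 fun x => I (0, x)).val +
      (rootValue 2 k hk 2 fun x => I (1, x)).val) % k,
    Nat.mod_lt _ hk⟩

/-!
The hard inputs have leaf values `x i` in subtree `i` and a root table that vanishes except at
`x i`, where it takes the value `c i`; the output is `c 0 + c 1`. Changing `c i` changes the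
output, so some key entry `(i, f_i(x i))` is queried. At the last time `t` at which a key entry
is queried (the pivot), the state's label reveals `i` and `x i`, and the rest of the run never
reads the other key entry. Hence the state, together with the other leaves and `c i`, determines
the input: the output read off the remaining run gives `c` of the other subtree. This injects
the `k ^ 6` hard inputs into `Q × [k]^3`.
-/

namespace DBP

variable {V : Type} {k : ℕ} {R : Type} (B : DBP V k R)

theorem iterate_step_of_label_eq_inr {I : V → Fin k} {q : B.Q} {r : R}
    (h : B.label q = .inr r) (n : ℕ) : (B.step I)^[n] q = q := by
  induction n with
  | zero => rfl
  | succ n ih => rw [Function.iterate_succ_apply', ih, step, h]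

theorem label_iterate_step_of_le {I : V → Fin k} {q : B.Q} {r : R} {n m : ℕ}
    (h : B.label ((B.step I)^[n] q) = .inr r) (hnm : n ≤ m) :
    B.label ((B.step I)^[m] q) = .inr r := by
  obtain ⟨d, rfl⟩ := Nat.exists_eq_add_of_le hnm
  rwa [Nat.add_comm, Function.iterate_add_apply, B.iterate_step_of_label_eq_inr h]

theorem iterate_step_congr {I I' : V → Fin k} {q : B.Q}
    (h : ∀ n v, B.label ((B.step I)^[n] q) = .inl v → I v = I' v) (n : ℕ) :
    (B.step I)^[n] q = (B.step I')^[n] q := by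
  induction n with
  | zero => rfl
  | succ n ih =>
    rw [Function.iterate_succ_apply', Function.iterate_succ_apply', ← ih, step, step]
    cases hl : B.label ((B.step I)^[n] q) with
    | inl v => simp only [h n v hl]
    | inr r => rfl

theorem iterate_step_eq_of_not_query {I I' : V → Fin k} {v : V}
    (hagree : ∀ u, u ≠ v → I u = I' u) {q : B.Q}
    (hv : ∀ n, B.label ((B.step I)^[n] q) ≠ .inl v) (n : ℕ) :
    (B.step I)^[n] q = (B.step I')^[n] q :=
  B.iterate_step_congr (fun m u hu => hagree u (by rintro rfl; exact hv m hu)) n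

variable {B} {f : (V → Fin k) → R}

theorem Computes.eq_of_label_eq_inr (hB : B.Computes f) {I : V → Fin k} {n : ℕ} {r : R}
    (h : B.label ((B.step I)^[n] B.start) = .inr r) : r = f I := by
  obtain ⟨t, ht⟩ := hB I
  rcases le_total n t with hle | hle
  · exact Sum.inr.inj ((B.label_iterate_step_of_le h hle).symm.trans ht)
  · exact Sum.inr.inj (h.symm.trans (B.label_iterate_step_of_le ht hle))

theorem Computes.eq_of_iterate_eq (hB : B.Computes f) {I I' : V → Fin k} {t t' : ℕ}
    (h : ∀ n, (B.step I)^[n + t] B.start = (B.step I')^[n + t'] B.start) : f I = f I' := by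
  obtain ⟨n, hn⟩ := hB I
  have hn' := B.label_iterate_step_of_le hn (Nat.le_add_right n t)
  rw [h n] at hn'
  exact hB.eq_of_label_eq_inr hn'

theorem Computes.exists_query_of_ne (hB : B.Computes f) {I I' : V → Fin k} {v : V}
    (hagree : ∀ u, u ≠ v → I u = I' u) (hne : f I ≠ f I') :
    ∃ n, B.label ((B.step I)^[n] B.start) = .inl v := by
  by_contra! hv
  exact hne (hB.eq_of_iterate_eq (t := 0) (t' := 0) (B.iterate_step_eq_of_not_query hagree hv))

-- Every query happens before the halting time, so the queries to `S` are bounded.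
theorem Computes.exists_last_query (hB : B.Computes f) {I : V → Fin k} {S : Set V}
    (h : ∃ n, ∃ v ∈ S, B.label ((B.step I)^[n] B.start) = .inl v) :
    ∃ t, (∃ v ∈ S, B.label ((B.step I)^[t] B.start) = .inl v) ∧
      ∀ s, t < s → ∀ v ∈ S, B.label ((B.step I)^[s] B.start) ≠ .inl v := by
  classical
  let P : ℕ → Prop := fun n => ∃ v ∈ S, B.label ((B.step I)^[n] B.start) = .inl v
  obtain ⟨T, hT⟩ := hB I
  have hbound : ∀ n, P n → n ≤ T := by
    rintro n ⟨v, -, hv⟩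
    by_contra! hlt
    rw [B.label_iterate_step_of_le hT hlt.le] at hv
    cases hv
  obtain ⟨n, hn⟩ := h
  exact ⟨Nat.findGreatest P T, Nat.findGreatest_spec (P := P) (hbound n hn) hn,
    fun s hs v hv hquery =>
      Nat.findGreatest_is_greatest hs (hbound s ⟨v, hv, hquery⟩) ⟨v, hv, hquery⟩⟩

end DBP

theorem fin_two_ne_add_one (i : Fin 2) : i ≠ i + 1 := by
  decide +revert

theorem fin_two_eq_or_eq_add_one (i j : Fin 2) : j = i ∨ j = i + 1 := by
  decide +revert

theorem fin_two_eq_of_add_eq {M : Type*} [AddCancelCommMonoid M] {c c' : Fin 2 → M} {i : Fin 2}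
    (hsum : c 0 + c 1 = c' 0 + c' 1) (hi : c i = c' i) : c = c' := by
  funext j
  fin_cases i <;> fin_cases j <;> simp_all

namespace SumMod

variable {k : ℕ}

def keyVar (x : Fin 2 → Fin 2 → Fin k) (i : Fin 2) : Fin 2 × TEVar 2 k 2 :=
  (i, .root (x i))

theorem keyVar_inj {x x' : Fin 2 → Fin 2 → Fin k} {i i' : Fin 2} :
    keyVar x i = keyVar x' i' ↔ i = i' ∧ x i = x' i' := by
  simp [keyVar]

variable [NeZero k]

def hardInput (x : Fin 2 → Fin 2 → Fin k) (c : Fin 2 → Fin k) : Fin 2 × TEVar 2 k 2 → Fin k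
  | (i, .root a) => if a = x i then c i else 0
  | (i, .child j _) => x i j

theorem sumModFun_hardInput (hk : 0 < k) (x : Fin 2 → Fin 2 → Fin k) (c : Fin 2 → Fin k) :
    sumModFun k hk (hardInput x c) = c 0 + c 1 := by
  simp [sumModFun, rootValue, hardInput, Fin.add_def]

theorem hardInput_update_of_ne (x : Fin 2 → Fin 2 → Fin k) (c : Fin 2 → Fin k) {i : Fin 2}
    (a : Fin k) {u : Fin 2 × TEVar 2 k 2} (hu : u ≠ keyVar x i) :
    hardInput x (Function.update c i a) u = hardInput x c u := by
  obtain ⟨i', v⟩ := u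
  cases v with
  | root b =>
    by_cases hi : i' = i
    · subst hi
      have hb : b ≠ x i' := fun hb => hu (by rw [hb, keyVar])
      simp [hardInput, hb]
    · simp [hardInput, hi]
  | child j y => rfl

variable {B : DBP (Fin 2 × TEVar 2 k 2) k (Fin k)}

theorem exists_pivot (hk : 2 ≤ k)
    (hB : B.Computes (sumModFun k (NeZero.pos k))) (x : Fin 2 → Fin 2 → Fin k)
    (c : Fin 2 → Fin k) :
    ∃ t i, B.label ((B.step (hardInput x c))^[t] B.start) = .inl (keyVar x i) ∧
      ∀ s, t < s → ∀ j,
        B.label ((B.step (hardInput x c))^[s] B.start) ≠ .inl (keyVar x j) := by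
  obtain ⟨n, hn⟩ := hB.exists_query_of_ne (I' := hardInput x (Function.update c 0 (c 0 + 1)))
    (fun u hu => (hardInput_update_of_ne x c _ hu).symm)
    (by simp [sumModFun_hardInput]; omega)
  obtain ⟨t, ⟨-, ⟨i, rfl⟩, ht⟩, hlast⟩ :=
    hB.exists_last_query (S := Set.range (keyVar x)) ⟨n, _, ⟨0, rfl⟩, hn⟩
  exact ⟨t, i, ht, fun s hs j => hlast s hs _ ⟨j, rfl⟩⟩

theorem iterate_step_hardInput_of_pivot {x : Fin 2 → Fin 2 → Fin k} {c : Fin 2 → Fin k}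
    {t : ℕ} {i : Fin 2}
    (hquery : B.label ((B.step (hardInput x c))^[t] B.start) = .inl (keyVar x i))
    (hlast : ∀ s, t < s → ∀ j,
      B.label ((B.step (hardInput x c))^[s] B.start) ≠ .inl (keyVar x j))
    (n : ℕ) :
    (B.step (hardInput x c))^[n + t] B.start =
      (B.step (hardInput x (Function.update c (i + 1) 0)))^[n]
        ((B.step (hardInput x c))^[t] B.start) := by
  rw [Function.iterate_add_apply]
  refine B.iterate_step_eq_of_not_query (v := keyVar x (i + 1))
    (fun u hu => (hardInput_update_of_ne x c 0 hu).symm) (fun m hm => ?_) n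
  rw [← Function.iterate_add_apply] at hm
  rcases m with _ | m
  · rw [Nat.zero_add, hquery, Sum.inl.injEq, keyVar_inj] at hm
    exact fin_two_ne_add_one i hm.1
  · exact hlast (m + 1 + t) (by omega) _ hm

theorem injective_pivot (hB : B.Computes (sumModFun k (NeZero.pos k)))
    (t : (Fin 2 → Fin 2 → Fin k) × (Fin 2 → Fin k) → ℕ)
    (i : (Fin 2 → Fin 2 → Fin k) × (Fin 2 → Fin k) → Fin 2)
    (hquery : ∀ p, B.label ((B.step (hardInput p.1 p.2))^[t p] B.start) = .inl (keyVar p.1 (i p)))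
    (hlast : ∀ p s, t p < s → ∀ j,
      B.label ((B.step (hardInput p.1 p.2))^[s] B.start) ≠ .inl (keyVar p.1 j)) :
    Function.Injective fun p => ((B.step (hardInput p.1 p.2))^[t p] B.start,
      p.1 (i p + 1), p.2 (i p)) := by
  rintro ⟨x, c⟩ ⟨x', c'⟩ h
  obtain ⟨hq, hx, hc⟩ : _ ∧ _ ∧ _ := by simpa only [Prod.mk.injEq] using h
  obtain ⟨hi, hxi⟩ := keyVar_inj.mp
    (Sum.inl.inj ((hquery (x, c)).symm.trans (hq ▸ hquery (x', c'))))
  dsimp only at hi hxi hx hc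
  rw [← hi] at hxi hx hc
  have hx : x = x' := funext fun j => by
    rcases fin_two_eq_or_eq_add_one (i (x, c)) j with rfl | rfl
    exacts [hxi, hx]
  subst hx
  have hupdate : Function.update c (i (x, c) + 1) 0 = Function.update c' (i (x, c) + 1) 0 :=
    funext fun j => by
      rcases fin_two_eq_or_eq_add_one (i (x, c)) j with rfl | rfl
      · simp [hc]
      · simp
  have hsum : sumModFun k (NeZero.pos k) (hardInput x c) =
      sumModFun k (NeZero.pos k) (hardInput x c') := hB.eq_of_iterate_eq fun n => by
    rw [iterate_step_hardInput_of_pivot (hquery (x, c)) (hlast (x, c)),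
      iterate_step_hardInput_of_pivot (hquery (x, c')) (hlast (x, c')), hq, hupdate, hi]
  rw [sumModFun_hardInput, sumModFun_hardInput] at hsum
  exact Prod.ext rfl (fin_two_eq_of_add_eq hsum hc)

end SumMod

/-- Every deterministic `k`-way branching program computing `SumMod_2^3(k)` has at
least `k^3` states. -/
theorem det_sumMod_lower (k : ℕ) (hk : 2 ≤ k) :
    ∀ B : DBP (Fin 2 × TEVar 2 k 2) k (Fin k),
      B.Computes (sumModFun k (by omega)) → k ^ 3 ≤ B.size := by
  intro B hB
  have : NeZero k := ⟨by omega⟩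
  let := B.fin
  choose t i hquery hlast using fun p : (Fin 2 → Fin 2 → Fin k) × (Fin 2 → Fin k) =>
    SumMod.exists_pivot hk hB p.1 p.2
  have hcard := Fintype.card_le_of_injective _ (SumMod.injective_pivot hB t i hquery hlast)
  simp only [Fintype.card_prod, Fintype.card_fun, Fintype.card_fin] at hcard
  have hcubes : k ^ 3 * k ^ 3 ≤ B.size * k ^ 3 := calc
    k ^ 3 * k ^ 3 = (k ^ 2) ^ 2 * k ^ 2 := by ring
    _ ≤ Fintype.card B.Q * (k ^ 2 * k) := hcard
    _ = B.size * k ^ 3 := by rw [DBP.size]; ring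
  exact Nat.le_of_mul_le_mul_right hcubes (by positivity)
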